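/- arXiv:1309.1347 — 4 statements merged into one kernel-verified Lean document; each statement's English description precedes it below -/
import Mathlib

section
/- If G is factor-critical and C is a nice odd cycle of G, and P is an odd ear of G relative to C (a path of odd length with both endpoints, but no interior vertex, in C), then C + P is factor-critical. -/
/-!
Deleting any vertex `v` of an odd cycle leaves an even path, whose alternate edges form a perfect
matching. Alternate edges also carry such near-perfect matchings across an odd ear `P` from `a`
to `b`, so adding an odd ear to any factor-critical subgraph `H` keeps it factor-critical. If `v`
lies in `H`, match `H - v` and the interior of `P` (an even path) separately. If `v` is an inner
vertex of `P`, it splits `P` into an even and an odd piece, say `a ⋯ v` even; match `H - a`,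
`a ⋯ v` without `v` and the interior of `v ⋯ b`.
-/

open SimpleGraph

/-- A graph is factor-critical if deleting any vertex leaves a graph with a perfect matching. -/
def FactorCritical {V : Type*} (G : SimpleGraph V) : Prop :=
  ∀ v : V, ∃ M : (G.induce {v}ᶜ).Subgraph, M.IsPerfectMatching

namespace SimpleGraph

variable {V : Type*} {G : SimpleGraph V}

namespace Subgraph

def HasMatchingOn (H : G.Subgraph) (S : Set V) : Prop :=
  ∃ M ≤ H, M.IsMatching ∧ M.verts = S

def IsFactorCritical (H : G.Subgraph) : Prop :=
  ∀ v ∈ H.verts, H.HasMatchingOn (H.verts \ {v})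

theorem HasMatchingOn.mono {H H' : G.Subgraph} {S : Set V} (h : H.HasMatchingOn S)
    (hle : H ≤ H') : H'.HasMatchingOn S :=
  let ⟨M, hM, hm, hS⟩ := h
  ⟨M, hM.trans hle, hm, hS⟩

theorem HasMatchingOn.sup {H₁ H₂ : G.Subgraph} {S₁ S₂ : Set V} (h₁ : H₁.HasMatchingOn S₁)
    (h₂ : H₂.HasMatchingOn S₂) (hS : Disjoint S₁ S₂) : (H₁ ⊔ H₂).HasMatchingOn (S₁ ∪ S₂) := by
  obtain ⟨M₁, hle₁, hM₁, rfl⟩ := h₁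
  obtain ⟨M₂, hle₂, hM₂, rfl⟩ := h₂
  refine ⟨M₁ ⊔ M₂, sup_le_sup hle₁ hle₂, hM₁.sup hM₂ ?_, rfl⟩
  rwa [hM₁.support_eq_verts, hM₂.support_eq_verts]

theorem hasMatchingOn_bot : (⊥ : G.Subgraph).HasMatchingOn ∅ :=
  ⟨⊥, le_rfl, fun _ h => h.elim, rfl⟩

theorem hasMatchingOn_subgraphOfAdj {x y : V} (h : G.Adj x y) :
    (G.subgraphOfAdj h).HasMatchingOn {x, y} :=
  ⟨_, le_rfl, .subgraphOfAdj h, subgraphOfAdj_verts G h⟩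

theorem IsFactorCritical.coe {H : G.Subgraph} (hH : H.IsFactorCritical) :
    FactorCritical H.coe := by
  rintro ⟨v, hv⟩
  obtain ⟨M, hle, hM, hverts⟩ := hH v hv
  refine ⟨{ verts := Set.univ
            Adj := fun x y => M.Adj x.1.1 y.1.1
            adj_sub := fun hxy => hle.2 hxy
            edge_vert := fun _ => Set.mem_univ _
            symm := ⟨fun _ _ hxy => M.adj_symm hxy⟩ }, ?_, fun _ => Set.mem_univ _⟩
  intro x _
  have hx : x.1.1 ∈ M.verts := by
    rw [hverts]
    exact ⟨x.1.2, fun hc => x.2 (Subtype.ext hc)⟩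
  obtain ⟨w, hw, hwu⟩ := hM hx
  have hwM : w ∈ M.verts := M.edge_vert hw.symm
  rw [hverts] at hwM
  exact ⟨⟨⟨w, hwM.1⟩, fun hc => hwM.2 (congrArg Subtype.val hc)⟩, hw,
    fun y hy => Subtype.ext (Subtype.ext (hwu y.1.1 hy))⟩

end Subgraph

namespace Walk

open Subgraph

theorem IsPath.hasMatchingOn_of_even : ∀ {x y : V} {q : G.Walk x y}, q.IsPath →
    Even q.length → q.toSubgraph.HasMatchingOn (q.toSubgraph.verts \ {y})
  | _, _, .nil, _, _ => by simpa using hasMatchingOn_bot.mono bot_le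
  | _, _, .cons _ .nil, _, he => by simp at he
  | x, y, .cons (v := w) h (.cons h' q), hp, he => by
      simp only [cons_isPath_iff, support_cons, List.mem_cons, not_or] at hp
      obtain ⟨⟨hq, hw⟩, hxw, hx⟩ := hp
      have ih := hq.hasMatchingOn_of_even (by simpa [parity_simps] using he)
      have hdisj : Disjoint {x, w} (q.toSubgraph.verts \ {y}) := by
        rw [verts_toSubgraph, Set.disjoint_left]
        rintro z (rfl | rfl) ⟨hz, -⟩ <;> contradiction
      have hS : (cons h (cons h' q)).toSubgraph.verts \ {y} =
          {x, w} ∪ q.toSubgraph.verts \ {y} := by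
        have := q.end_mem_support
        ext z
        simp only [verts_toSubgraph, support_cons]
        grind
      rw [hS]
      exact ((hasMatchingOn_subgraphOfAdj h).sup ih hdisj).mono (sup_le_sup_left le_sup_right _)

theorem IsPath.hasMatchingOn_of_odd {x y : V} {q : G.Walk x y} (hq : q.IsPath)
    (ho : Odd q.length) : q.toSubgraph.HasMatchingOn (q.toSubgraph.verts \ {x, y}) := by
  cases q with
  | nil => simp at ho
  | @cons _ w _ h q =>
    rw [cons_isPath_iff] at hq
    have hS : (cons h q).toSubgraph.verts \ {x, y} = q.toSubgraph.verts \ {y} := by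
      ext z
      simp only [verts_toSubgraph, support_cons]
      grind
    rw [hS]
    exact (hq.1.hasMatchingOn_of_even (by simpa [parity_simps] using ho)).mono le_sup_right

theorem IsCycle.isFactorCritical_of_odd {u : V} {c : G.Walk u u} (hc : c.IsCycle)
    (ho : Odd c.length) : c.toSubgraph.IsFactorCritical := by
  classical
  intro v hv
  rw [verts_toSubgraph] at hv
  rw [← toSubgraph_rotate c hv]
  have hc' := hc.rotate hv
  have ho' : Odd (c.rotate v hv).length := by rwa [length_rotate]
  generalize c.rotate v hv = c' at hc' ho' ⊢
  cases c' with
  | nil => simp at ho'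
  | cons h q =>
    rw [cons_isCycle_iff] at hc'
    have hS : (cons h q).toSubgraph.verts \ {v} = q.toSubgraph.verts \ {v} := by
      have := q.end_mem_support
      ext z
      simp only [verts_toSubgraph, support_cons]
      grind
    rw [hS]
    exact (hc'.1.hasMatchingOn_of_even (by simpa [parity_simps] using ho')).mono le_sup_right

end Walk

namespace Subgraph

open Walk

theorem HasMatchingOn.sup_oddEar {H : G.Subgraph} {v x y : V}
    (hH : H.HasMatchingOn (H.verts \ {v})) (hv : v ∈ H.verts) {q : G.Walk x y} (hq : q.IsPath)
    (ho : Odd q.length) (hx : x ∈ H.verts) (hy : y ∈ H.verts)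
    (hint : ∀ z ∈ q.support, z ≠ x → z ≠ y → z ∉ H.verts) :
    (H ⊔ q.toSubgraph).HasMatchingOn ((H ⊔ q.toSubgraph).verts \ {v}) := by
  have hdisj : Disjoint (H.verts \ {v}) (q.toSubgraph.verts \ {x, y}) := by
    rw [verts_toSubgraph, Set.disjoint_left]
    rintro z ⟨hz, -⟩ ⟨hzq, hzxy⟩
    simp only [Set.mem_insert_iff, Set.mem_singleton_iff, not_or] at hzxy
    exact hint z hzq hzxy.1 hzxy.2 hz
  have hS : (H ⊔ q.toSubgraph).verts \ {v} = H.verts \ {v} ∪ q.toSubgraph.verts \ {x, y} := by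
    ext z
    simp only [verts_sup, verts_toSubgraph]
    grind
  rw [hS]
  exact hH.sup (hq.hasMatchingOn_of_odd ho) hdisj

theorem HasMatchingOn.sup_evenPath {H : G.Subgraph} {x y : V}
    (hH : H.HasMatchingOn (H.verts \ {x})) {q : G.Walk x y} (hq : q.IsPath) (he : Even q.length)
    (hint : ∀ z ∈ q.support, z ≠ x → z ∉ H.verts) :
    (H ⊔ q.toSubgraph).HasMatchingOn ((H ⊔ q.toSubgraph).verts \ {y}) := by
  have hdisj : Disjoint (H.verts \ {x}) (q.toSubgraph.verts \ {y}) := by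
    rw [verts_toSubgraph, Set.disjoint_left]
    rintro z ⟨hz, hzx⟩ ⟨hzq, -⟩
    exact hint z hzq hzx hz
  have hS : (H ⊔ q.toSubgraph).verts \ {y} = H.verts \ {x} ∪ q.toSubgraph.verts \ {y} := by
    have := q.start_mem_support
    have := q.end_mem_support
    ext z
    simp only [verts_sup, verts_toSubgraph]
    grind
  rw [hS]
  exact hH.sup (hq.hasMatchingOn_of_even he) hdisj

theorem HasMatchingOn.sup_append_of_even_of_odd {H : G.Subgraph} {a v b : V}
    (hH : H.HasMatchingOn (H.verts \ {a})) {q₁ : G.Walk a v} {q₂ : G.Walk v b}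
    (hp : (q₁.append q₂).IsPath) (h₁ : Even q₁.length) (h₂ : Odd q₂.length)
    (hb : b ∈ H.verts) (hv : v ∉ H.verts)
    (hint : ∀ z ∈ (q₁.append q₂).support, z ≠ a → z ≠ b → z ∉ H.verts) :
    (H ⊔ (q₁.append q₂).toSubgraph).HasMatchingOn
      ((H ⊔ (q₁.append q₂).toSubgraph).verts \ {v}) := by
  have hmeet : ∀ z ∈ q₁.support, z ∈ q₂.support → z = v := fun z h₁ h₂ => by
    by_contra hzv
    exact hp.ne_of_mem_support_of_append hzv h₁ h₂ rfl
  have hH₁ := hH.sup_evenPath hp.of_append_left h₁ fun z hz hza hzH => by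
    refine hint z ((mem_support_append_iff _ _).mpr (.inl hz)) hza (fun hzb => ?_) hzH
    subst hzb
    exact hv (hmeet z hz q₂.end_mem_support ▸ hzH)
  have hH₂ := hH₁.sup_oddEar (by simp) hp.of_append_right h₂ (by simp) (by simp [hb])
    fun z hz hzv hzb hzH => by
      have hzq₁ : z ∉ q₁.support := fun h => hzv (hmeet z h hz)
      have hza : z ≠ a := fun h => hzq₁ (h ▸ q₁.start_mem_support)
      simp only [verts_sup, verts_toSubgraph, Set.mem_union, Set.mem_ofPred_eq] at hzH
      exact hint z ((mem_support_append_iff _ _).mpr (.inr hz)) hza hzb (hzH.resolve_right hzq₁)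
  rwa [toSubgraph_append, ← sup_assoc]

theorem IsFactorCritical.sup_oddEar {H : G.Subgraph} (hH : H.IsFactorCritical) {a b : V}
    {p : G.Walk a b} (hp : p.IsPath) (ho : Odd p.length) (ha : a ∈ H.verts) (hb : b ∈ H.verts)
    (hint : ∀ z ∈ p.support, z ≠ a → z ≠ b → z ∉ H.verts) :
    (H ⊔ p.toSubgraph).IsFactorCritical := by
  intro v hv
  by_cases hvH : v ∈ H.verts
  · exact (hH v hvH).sup_oddEar hvH hp ho ha hb hint
  have hvp : v ∈ p.support := by simpa [hvH] using hv
  obtain ⟨q₁, q₂, -, -, rfl⟩ := hp.mem_support_iff_exists_append.mp hvp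
  rw [length_append] at ho
  rcases Nat.even_or_odd q₁.length with h₁ | h₁
  · exact (hH a ha).sup_append_of_even_of_odd hp h₁ ((Nat.odd_add'.mp ho).mpr h₁) hb hvH hint
  · have := (hH b hb).sup_append_of_even_of_odd (q₁ := q₂.reverse) (q₂ := q₁.reverse)
      (by rwa [← reverse_append, isPath_reverse_iff]) (by simpa using (Nat.odd_add.mp ho).mp h₁)
      (by simpa using h₁) ha hvH
      (by simpa [← reverse_append] using fun z hz hzb hza => hint z hz hza hzb)
    rwa [← reverse_append, toSubgraph_reverse] at this

end Subgraph

end SimpleGraph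

theorem stmt_5_general {V : Type*} (G : SimpleGraph V)
    {u : V} (c : G.Walk u u) (hc : c.IsCycle) (hcodd : Odd c.length)
    {a b : V} (p : G.Walk a b) (hp : p.IsPath) (hpodd : Odd p.length)
    (ha : a ∈ c.support) (hb : b ∈ c.support)
    (hint : ∀ x ∈ p.support, x ≠ a → x ≠ b → x ∉ c.support) :
    FactorCritical (c.toSubgraph ⊔ p.toSubgraph).coe :=
  ((hc.isFactorCritical_of_odd hcodd).sup_oddEar hp hpodd (by simpa) (by simpa)
    (by simpa using hint)).coe

/-- Adding an odd ear to a nice odd cycle of a factor-critical graph yields a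
factor-critical subgraph. -/
theorem stmt_5 {V : Type*} (G : SimpleGraph V) (hG : FactorCritical G)
    {u : V} (c : G.Walk u u) (hc : c.IsCycle) (hcodd : Odd c.length)
    (hnice : ∃ M : (G.induce {x | x ∈ c.support}ᶜ).Subgraph, M.IsPerfectMatching)
    {a b : V} (p : G.Walk a b) (hp : p.IsPath) (hpodd : Odd p.length)
    (ha : a ∈ c.support) (hb : b ∈ c.support)
    (hint : ∀ x ∈ p.support, x ≠ a → x ≠ b → x ∉ c.support) :
    FactorCritical (c.toSubgraph ⊔ p.toSubgraph).coe :=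
  stmt_5_general G c hc hcodd p hp hpodd ha hb hint
end

section
/- Let G be a graph and U' ⊂ V(G) with |U'| odd, and suppose G[U'] is not a nice subgraph of G (i.e., G − U' has no perfect matching). Then for every vertex w ∈ U' and every perfect matching M of G − w, at least two vertices of U' are matched by M to vertices outside U' or unmatched. -/
open SimpleGraph

/-- A matching represented as a set of edges: edges of `G`, pairwise vertex-disjoint. -/
def IsMatchingSet {V : Type*} (G : SimpleGraph V) (M : Set (Sym2 V)) : Prop :=
  M ⊆ G.edgeSet ∧ ∀ e ∈ M, ∀ f ∈ M, e ≠ f → ∀ v : V, ¬(v ∈ e ∧ v ∈ f)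

/-- A vertex is covered by a set of edges if some edge contains it. -/
def Covers {V : Type*} (M : Set (Sym2 V)) (v : V) : Prop := ∃ e ∈ M, v ∈ e

/-- `M` is a perfect matching of `G - v`: a matching covering every vertex except `v`. -/
def IsPMOff {V : Type*} (G : SimpleGraph V) (M : Set (Sym2 V)) (v : V) : Prop :=
  IsMatchingSet G M ∧ ¬Covers M v ∧ ∀ w : V, w ≠ v → Covers M w
/-- `u` is matched by `M` within the vertex set `U`. -/
def MatchedWithin {V : Type*} (M : Set (Sym2 V)) (U : Set V) (u : V) : Prop :=
  ∃ e ∈ M, u ∈ e ∧ ∀ x ∈ e, x ∈ U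

/-! If `w` were the only vertex of `U'` not matched within `U'`, every covered vertex of `U'`
would be matched inside `U'`, so no edge of `M` would cross the boundary of `U'`; the edges of
`M` outside `U'` would then form a perfect matching of `G - U'`. -/

theorem IsMatchingSet.eq_of_mem_of_mem {V : Type*} {G : SimpleGraph V} {M : Set (Sym2 V)}
    (hM : IsMatchingSet G M) {e f : Sym2 V} (he : e ∈ M) (hf : f ∈ M) {v : V}
    (hve : v ∈ e) (hvf : v ∈ f) : e = f := by
  by_contra hne
  exact hM.2 e he f hf hne v ⟨hve, hvf⟩

theorem IsMatchingSet.mem_of_matchedWithin {V : Type*} {G : SimpleGraph V} {M : Set (Sym2 V)}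
    (hM : IsMatchingSet G M) {U : Set V} {x y : V} (hxy : s(x, y) ∈ M)
    (hy : MatchedWithin M U y) : x ∈ U := by
  obtain ⟨f, hf, hyf, hfU⟩ := hy
  rw [← hM.eq_of_mem_of_mem hxy hf (Sym2.mem_mk_right x y) hyf] at hfU
  exact hfU x (Sym2.mem_mk_left x y)

/-- The edges of `M` inside `S` form a perfect matching of `G[S]`. -/
theorem IsMatchingSet.exists_isPerfectMatching_induce {V : Type*} {G : SimpleGraph V}
    {M : Set (Sym2 V)} (hM : IsMatchingSet G M) {S : Set V} (hcov : ∀ v ∈ S, Covers M v)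
    (hclosed : ∀ x y : V, x ∈ S → s(x, y) ∈ M → y ∈ S) :
    ∃ P : (G.induce S).Subgraph, P.IsPerfectMatching := by
  refine ⟨⟨Set.univ, fun a b => s(a.1, b.1) ∈ M, fun hab => hM.1 hab, fun _ => trivial,
    ⟨fun _ _ hab => by rwa [Sym2.eq_swap]⟩⟩, fun v _ => ?_, fun _ => trivial⟩
  obtain ⟨e, he, hve⟩ := hcov v v.2
  obtain ⟨y, rfl⟩ := Sym2.mem_iff_exists.mp hve
  refine ⟨⟨y, hclosed v y v.2 he⟩, he, fun z hz => Subtype.ext ?_⟩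
  exact Sym2.congr_right.mp
    (hM.eq_of_mem_of_mem hz he (Sym2.mem_mk_left _ _) (Sym2.mem_mk_left _ _))

theorem stmt_8_general {V : Type*} (G : SimpleGraph V) (U' : Finset V)
    (hnotnice : ¬∃ M : (G.induce (↑U' : Set V)ᶜ).Subgraph, M.IsPerfectMatching)
    (w : V) (hw : w ∈ U') (M : Set (Sym2 V)) (hM : IsPMOff G M w) :
    ∃ u₁ ∈ U', ∃ u₂ ∈ U', u₁ ≠ u₂ ∧
      ¬MatchedWithin M (↑U' : Set V) u₁ ∧ ¬MatchedWithin M (↑U' : Set V) u₂ := by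
  obtain ⟨hMatch, hw_uncovered, hcov⟩ := hM
  by_contra! hcon
  have hw_unmatched : ¬MatchedWithin M (↑U' : Set V) w := fun ⟨e, he, hwe, _⟩ =>
    hw_uncovered ⟨e, he, hwe⟩
  refine hnotnice (hMatch.exists_isPerfectMatching_induce (fun v hv => hcov v ?_) ?_)
  · exact fun hvw => hv (hvw ▸ hw)
  · intro x y hx hxy hy
    have hyw : y ≠ w := by
      rintro rfl
      exact hw_uncovered ⟨s(x, y), hxy, Sym2.mem_mk_right x y⟩
    exact hx (hMatch.mem_of_matchedWithin hxy (hcon w hw y hy hyw.symm hw_unmatched))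

/-- If `G[U']` is not nice (`G − U'` has no perfect matching), `|U'|` odd, then every
perfect matching of `G − w` (for `w ∈ U'`) leaves at least two vertices of `U'`
unmatched within `U'`. -/
theorem stmt_8 {V : Type*} [Fintype V] (G : SimpleGraph V) (U' : Finset V)
    (hsub : U' ⊂ Finset.univ) (hodd : Odd U'.card)
    (hnotnice : ¬∃ M : (G.induce (↑U' : Set V)ᶜ).Subgraph, M.IsPerfectMatching)
    (w : V) (hw : w ∈ U') (M : Set (Sym2 V)) (hM : IsPMOff G M w) :
    ∃ u₁ ∈ U', ∃ u₂ ∈ U', u₁ ≠ u₂ ∧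
      ¬MatchedWithin M (↑U' : Set V) u₁ ∧ ¬MatchedWithin M (↑U' : Set V) u₂ :=
  stmt_8_general G U' hnotnice w hw M hM
end

section
/- Let G[U] be factor-critical and 2-connected, with v ∈ U of degree at least 3 in G[U], and let e = (i,j) ∈ E[U]. Then there exists a near-perfect matching M of G[U] such that e ∈ M and v is covered by M. -/
open SimpleGraph

/-- A graph is 2-(vertex-)connected: at least 3 vertices and deleting any vertex leaves it connected. -/
def TwoConnected {V : Type*} (G : SimpleGraph V) : Prop :=
  3 ≤ (Set.univ : Set V).ncard ∧ ∀ v : V, (G.induce {v}ᶜ).Connected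


/-!
Factor-criticality gives a near-perfect matching missing `i`. Rematching `i` with `j` exposes
the former partner of `j` instead. If that exposed vertex is `v`, then `v` has a neighbour
`w ∉ {i, j}` because its degree is at least 3, and rematching `v` with `w` keeps the edge `ij`,
since only the edge at `w` is removed.
-/

section

variable {V : Type*} {G : SimpleGraph V} {U : Set V} {M : Set (Sym2 V)} {m : V}

structure IsNearPerfectMatchingOn (G : SimpleGraph V) (U : Set V) (M : Set (Sym2 V)) (m : V) :
    Prop where
  isMatchingSet : IsMatchingSet G M
  mem_of_mem_edge : ∀ f ∈ M, ∀ x ∈ f, x ∈ U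
  mem : m ∈ U
  not_covers : ¬Covers M m
  covers : ∀ u ∈ U, u ≠ m → Covers M u

namespace IsNearPerfectMatchingOn

theorem existsUnique_not_covers (hM : IsNearPerfectMatchingOn G U M m) :
    ∃! u, u ∈ U ∧ ¬Covers M u :=
  ⟨m, ⟨hM.mem, hM.not_covers⟩, fun u ⟨hu, hnc⟩ => by_contra fun h => hnc (hM.covers u hu h)⟩

theorem swap {w z : V} (hM : IsNearPerfectMatchingOn G U M m) (hmw : G.Adj m w)
    (hwz : s(w, z) ∈ M) :
    IsNearPerfectMatchingOn G U (insert s(m, w) (M \ {s(w, z)})) z := by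
  obtain ⟨⟨hMG, hdisj⟩, hMU, hm, hnc, hcov⟩ := hM
  have hwU : w ∈ U := hMU _ hwz w (Sym2.mem_mk_left w z)
  have disjoint_new : ∀ f ∈ M, f ≠ s(w, z) → ∀ x, ¬(x ∈ s(m, w) ∧ x ∈ f) := by
    rintro f hf hfwz x ⟨hx, hxf⟩
    rcases Sym2.mem_iff.mp hx with rfl | rfl
    · exact hnc ⟨f, hf, hxf⟩
    · exact hdisj f hf _ hwz hfwz x ⟨hxf, Sym2.mem_mk_left x z⟩
  refine ⟨⟨Set.insert_subset hmw (Set.sdiff_subset.trans hMG), ?_⟩, ?_, hMU _ hwz z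
    (Sym2.mem_mk_right w z), ?_, ?_⟩
  · rintro f (rfl | ⟨hf, hfwz⟩) g (rfl | ⟨hg, hgwz⟩) hfg x
    · exact absurd rfl hfg
    · exact disjoint_new g hg hgwz x
    · exact fun ⟨hxf, hxg⟩ => disjoint_new f hf hfwz x ⟨hxg, hxf⟩
    · exact hdisj f hf g hg hfg x
  · rintro f (rfl | ⟨hf, -⟩) x hx
    · rcases Sym2.mem_iff.mp hx with rfl | rfl <;> assumption
    · exact hMU f hf x hx
  · rintro ⟨f, (rfl | ⟨hf, hfwz⟩), hzf⟩
    · rcases Sym2.mem_iff.mp hzf with rfl | rfl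
      · exact hnc ⟨_, hwz, Sym2.mem_mk_right w z⟩
      · exact G.loopless.irrefl z (hMG hwz)
    · exact hdisj f hf _ hwz hfwz z ⟨hzf, Sym2.mem_mk_right w z⟩
  · intro u hu huz
    by_cases hum : u = m
    · exact ⟨_, Set.mem_insert _ _, hum ▸ Sym2.mem_mk_left m w⟩
    by_cases huw : u = w
    · exact ⟨_, Set.mem_insert _ _, huw ▸ Sym2.mem_mk_right m w⟩
    obtain ⟨f, hf, huf⟩ := hcov u hu hum
    refine ⟨f, Set.mem_insert_of_mem _ ⟨hf, ?_⟩, huf⟩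
    rintro rfl
    rcases Sym2.mem_iff.mp huf with rfl | rfl
    · exact huw rfl
    · exact huz rfl

theorem exists_of_adj {w : V} (hM : IsNearPerfectMatchingOn G U M m) (hw : w ∈ U)
    (hmw : G.Adj m w) :
    ∃ z M', IsNearPerfectMatchingOn G U M' z ∧ s(m, w) ∈ M' ∧ ∀ f ∈ M, w ∉ f → f ∈ M' := by
  obtain ⟨f, hf, hwf⟩ := hM.covers w hw hmw.ne'
  obtain ⟨z, rfl⟩ := Sym2.mem_iff_exists.mp hwf
  refine ⟨z, _, hM.swap hmw hf, Set.mem_insert _ _, fun g hg hwg => ?_⟩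
  exact Set.mem_insert_of_mem _ ⟨hg, by rintro rfl; exact hwg (Sym2.mem_mk_left w z)⟩

end IsNearPerfectMatchingOn

theorem SimpleGraph.Subgraph.IsMatching.isNearPerfectMatchingOn {M : G.Subgraph}
    (hM : M.IsMatching) (hm : m ∈ U) (hverts : M.verts = U \ {m}) :
    IsNearPerfectMatchingOn G U M.edgeSet m := by
  have covers_iff : ∀ x, Covers M.edgeSet x ↔ x ∈ U \ {m} := fun x => by
    rw [← hverts, hM.verts_eq_biUnion_edgeSet]
    simp [Covers]
  refine ⟨⟨M.edgeSet_subset, ?_⟩, fun f hf x hx => ?_, hm, fun h => ?_, fun u hu hum => ?_⟩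
  · intro e he f hf hef x ⟨hxe, hxf⟩
    obtain ⟨y, rfl⟩ := Sym2.mem_iff_exists.mp hxe
    obtain ⟨y', rfl⟩ := Sym2.mem_iff_exists.mp hxf
    obtain rfl := hM.eq_of_adj_left he hf
    exact hef rfl
  · exact ((covers_iff x).mp ⟨f, hf, hx⟩).1
  · exact ((covers_iff m).mp h).2 rfl
  · exact (covers_iff u).mpr ⟨hu, hum⟩

theorem FactorCritical.exists_isNearPerfectMatchingOn (hfc : FactorCritical (G.induce U))
    (hm : m ∈ U) : ∃ M, IsNearPerfectMatchingOn G U M m := by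
  obtain ⟨M, hM⟩ := hfc ⟨m, hm⟩
  let f := (Embedding.induce (G := G) U).comp (Embedding.induce {(⟨m, hm⟩ : U)}ᶜ)
  refine ⟨_, (hM.1.map f.toHom f.injective).isNearPerfectMatchingOn hm ?_⟩
  ext x
  rw [Subgraph.map_verts, hM.2.verts_eq_univ]
  simp only [f, Set.image_univ, Set.mem_range, Subtype.exists, Set.mem_compl_iff,
    Set.mem_singleton_iff, Set.mem_sdiff]
  exact ⟨by rintro ⟨a, ha, ham, rfl⟩; exact ⟨ha, fun h => ham (Subtype.ext h)⟩,
    fun ⟨hx, hxm⟩ => ⟨x, hx, fun h => hxm (congrArg Subtype.val h), rfl⟩⟩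

theorem Set.exists_mem_ne_ne_of_three_le_ncard {α : Type*} {s : Set α} (hs : 3 ≤ s.ncard)
    (a b : α) : ∃ x ∈ s, x ≠ a ∧ x ≠ b := by
  have hab : ({a, b} : Set α).ncard < s.ncard :=
    ((Set.ncard_insert_le a {b}).trans (by simp)).trans_lt hs
  obtain ⟨x, hxs, hxab⟩ := Set.exists_mem_notMem_of_ncard_lt_ncard hab
  exact ⟨x, hxs, fun h => hxab (.inl h), fun h => hxab (.inr h)⟩

theorem FactorCritical.exists_isNearPerfectMatchingOn_mem_covers
    (hfc : FactorCritical (G.induce U)) {v i j : V} (hdeg : 3 ≤ {u | u ∈ U ∧ G.Adj v u}.ncard)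
    (hv : v ∈ U) (hi : i ∈ U) (hj : j ∈ U) (hij : G.Adj i j) :
    ∃ M m, IsNearPerfectMatchingOn G U M m ∧ s(i, j) ∈ M ∧ Covers M v := by
  obtain ⟨M₀, hM₀⟩ := hfc.exists_isNearPerfectMatchingOn hi
  obtain ⟨k, N, hN, hijN, -⟩ := hM₀.exists_of_adj hj hij
  by_cases hvk : v = k
  · subst hvk
    obtain ⟨w, ⟨hwU, hvw⟩, hwi, hwj⟩ := Set.exists_mem_ne_ne_of_three_le_ncard hdeg i j
    obtain ⟨z, N', hN', hvwN', hN'N⟩ := hN.exists_of_adj hwU hvw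
    refine ⟨N', z, hN', hN'N _ hijN fun hw => ?_, _, hvwN', Sym2.mem_mk_left v w⟩
    rcases Sym2.mem_iff.mp hw with rfl | rfl
    exacts [hwi rfl, hwj rfl]
  · exact ⟨N, k, hN, hijN, hN.covers v hv hvk⟩

end

theorem stmt_12_general {V : Type*} (G : SimpleGraph V) (U : Finset V)
    (hfc : FactorCritical (G.induce (↑U : Set V)))
    (v : V) (hv : v ∈ U) (hdeg : 3 ≤ {u | u ∈ U ∧ G.Adj v u}.ncard)
    (i j : V) (hi : i ∈ U) (hj : j ∈ U) (hij : G.Adj i j) :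
    ∃ M : Set (Sym2 V),
      (∀ f ∈ M, f ∈ G.edgeSet ∧ ∀ x ∈ f, x ∈ U) ∧
      (∀ f ∈ M, ∀ g ∈ M, f ≠ g → ∀ x : V, ¬(x ∈ f ∧ x ∈ g)) ∧
      s(i, j) ∈ M ∧ Covers M v ∧
      (∃! u, u ∈ U ∧ ¬Covers M u) := by
  obtain ⟨M, m, hM, hijM, hvM⟩ :=
    hfc.exists_isNearPerfectMatchingOn_mem_covers hdeg hv hi hj hij
  exact ⟨M, fun f hf => ⟨hM.isMatchingSet.1 hf, hM.mem_of_mem_edge f hf⟩, hM.isMatchingSet.2,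
    hijM, hvM, hM.existsUnique_not_covers⟩

/-- If `G[U]` is factor-critical and 2-connected, `v ∈ U` has degree at least 3 in
`G[U]`, and `(i,j) ∈ E[U]`, then `G[U]` has a near-perfect matching containing `(i,j)`
and covering `v`. -/
theorem stmt_12 {V : Type*} (G : SimpleGraph V) (U : Finset V)
    (hfc : FactorCritical (G.induce (↑U : Set V)))
    (h2c : TwoConnected (G.induce (↑U : Set V)))
    (v : V) (hv : v ∈ U) (hdeg : 3 ≤ {u | u ∈ U ∧ G.Adj v u}.ncard)
    (i j : V) (hi : i ∈ U) (hj : j ∈ U) (hij : G.Adj i j) :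
    ∃ M : Set (Sym2 V),
      (∀ f ∈ M, f ∈ G.edgeSet ∧ ∀ x ∈ f, x ∈ U) ∧
      (∀ f ∈ M, ∀ g ∈ M, f ≠ g → ∀ x : V, ¬(x ∈ f ∧ x ∈ g)) ∧
      s(i, j) ∈ M ∧ Covers M v ∧
      (∃! u, u ∈ U ∧ ¬Covers M u) :=
  stmt_12_general G U hfc v hv hdeg i j hi hj hij
end

section
/- Let G[U] be factor-critical, and let U' be a set of vertices with U' ∩ U ≠ ∅, U' ⊄ U, and |U'| odd. Then there exists a near-perfect matching M of G[U] such that at least two vertices of U' are not matched by M to vertices of U'. -/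
open SimpleGraph

namespace SimpleGraph.Subgraph

variable {V : Type*} {G : SimpleGraph V} {N : G.Subgraph}

theorem covers_edgeSet_iff {v : V} : Covers N.edgeSet v ↔ v ∈ N.support := by
  constructor
  · rintro ⟨e, he, hv⟩
    obtain ⟨w, rfl⟩ := Sym2.mem_iff_exists.mp hv
    exact ⟨w, he⟩
  · rintro ⟨w, hvw⟩
    exact ⟨s(v, w), hvw, Sym2.mem_mk_left v w⟩

theorem IsMatching.covers_edgeSet_iff (hN : N.IsMatching) {v : V} :
    Covers N.edgeSet v ↔ v ∈ N.verts := by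
  rw [Subgraph.covers_edgeSet_iff, hN.support_eq_verts]

theorem IsMatching.edgeSet_vertex_disjoint (hN : N.IsMatching) {e f : Sym2 V}
    (he : e ∈ N.edgeSet) (hf : f ∈ N.edgeSet) (hef : e ≠ f) (v : V) : ¬(v ∈ e ∧ v ∈ f) := by
  rintro ⟨hve, hvf⟩
  obtain ⟨a, rfl⟩ := Sym2.mem_iff_exists.mp hve
  obtain ⟨b, rfl⟩ := Sym2.mem_iff_exists.mp hvf
  exact hef (congrArg (s(v, ·)) (hN.eq_of_adj_left (v := a) (w := b) he hf))

end SimpleGraph.Subgraph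

theorem FactorCritical.exists_isMatching_verts_eq {V : Type*} {G : SimpleGraph V} {s : Set V}
    (hfc : FactorCritical (G.induce s)) {x : V} (hx : x ∈ s) :
    ∃ N : G.Subgraph, N.IsMatching ∧ N.verts = s \ {x} := by
  obtain ⟨M, hM⟩ := hfc ⟨x, hx⟩
  let φ : (G.induce s).induce {⟨x, hx⟩}ᶜ ↪g G := (Embedding.induce s).comp (Embedding.induce _)
  refine ⟨M.map φ.toHom, hM.1.map φ.toHom φ.injective, ?_⟩
  ext v
  simp only [Subgraph.map_verts, Set.mem_image, Set.mem_sdiff, Set.mem_singleton_iff]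
  constructor
  · rintro ⟨w, -, rfl⟩
    exact ⟨w.1.2, fun h => w.2 (Subtype.ext h)⟩
  · rintro ⟨hvs, hvx⟩
    exact ⟨⟨⟨v, hvs⟩, fun h => hvx (congrArg Subtype.val h)⟩, hM.2 _, rfl⟩

theorem stmt_18_general {V : Type*} (G : SimpleGraph V) (U U' : Finset V)
    (hfc : FactorCritical (G.induce (↑U : Set V)))
    (hint : ∃ x, x ∈ U' ∧ x ∈ U) (hnsub : ¬U' ⊆ U) :
    ∃ M : Set (Sym2 V),
      (∀ f ∈ M, f ∈ G.edgeSet ∧ ∀ x ∈ f, x ∈ U) ∧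
      (∀ f ∈ M, ∀ g ∈ M, f ≠ g → ∀ x : V, ¬(x ∈ f ∧ x ∈ g)) ∧
      (∃! u, u ∈ U ∧ ¬Covers M u) ∧
      ∃ u₁ ∈ U', ∃ u₂ ∈ U', u₁ ≠ u₂ ∧
        ¬MatchedWithin M (↑U' : Set V) u₁ ∧ ¬MatchedWithin M (↑U' : Set V) u₂ := by
  obtain ⟨x, hxU', hxU⟩ := hint
  obtain ⟨y, hyU', hyU⟩ := Finset.not_subset.mp hnsub
  obtain ⟨N, hN, hverts⟩ := hfc.exists_isMatching_verts_eq (Finset.mem_coe.mpr hxU)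
  have hcovers (v : V) : Covers N.edgeSet v ↔ v ∈ U ∧ v ≠ x := by
    rw [hN.covers_edgeSet_iff, hverts]
    simp
  -- Both `x` (left exposed by `N`) and `y` (outside `U`) are not covered at all.
  have hunmatched {v : V} (hv : ¬(v ∈ U ∧ v ≠ x)) : ¬MatchedWithin N.edgeSet U' v :=
    fun ⟨e, he, hve, _⟩ => hv ((hcovers v).mp ⟨e, he, hve⟩)
  refine ⟨N.edgeSet, fun f hf => ⟨N.edgeSet_subset hf, fun v hv => ?_⟩,
    fun _ he _ hf hef => hN.edgeSet_vertex_disjoint he hf hef, ⟨x, ?_, ?_⟩,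
    x, hxU', y, hyU', fun h => hyU (h ▸ hxU), hunmatched (by simp), hunmatched (by simp [hyU])⟩
  · exact ((hcovers v).mp ⟨f, hf, hv⟩).1
  · exact ⟨hxU, by simp [hcovers]⟩
  · rintro u ⟨huU, hu⟩
    by_contra hux
    exact hu ((hcovers u).mpr ⟨huU, hux⟩)

/-- If `G[U]` is factor-critical, `U' ∩ U ≠ ∅`, `U' ⊄ U`, `|U'|` odd, then `G[U]` has a
near-perfect matching in which at least two vertices of `U'` are not matched to vertices
of `U'`. -/
theorem stmt_18 {V : Type*} (G : SimpleGraph V) (U U' : Finset V)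
    (hfc : FactorCritical (G.induce (↑U : Set V)))
    (hint : ∃ x, x ∈ U' ∧ x ∈ U) (hnsub : ¬U' ⊆ U) (hodd : Odd U'.card) :
    ∃ M : Set (Sym2 V),
      (∀ f ∈ M, f ∈ G.edgeSet ∧ ∀ x ∈ f, x ∈ U) ∧
      (∀ f ∈ M, ∀ g ∈ M, f ≠ g → ∀ x : V, ¬(x ∈ f ∧ x ∈ g)) ∧
      (∃! u, u ∈ U ∧ ¬Covers M u) ∧
      ∃ u₁ ∈ U', ∃ u₂ ∈ U', u₁ ≠ u₂ ∧
        ¬MatchedWithin M (↑U' : Set V) u₁ ∧ ¬MatchedWithin M (↑U' : Set V) u₂ :=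
  stmt_18_general G U U' hfc hint hnsub
end
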